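/- Every pure vertex decomposable simplicial complex is shellable. -/

import Mathlib

open Finset

/-- A simplicial complex on vertex set `ℕ`, given as the finite family of all of its
faces, closed under taking subsets. -/
def IsComplex (Δ : Finset (Finset ℕ)) : Prop :=
  ∀ F ∈ Δ, ∀ G ⊆ F, G ∈ Δ

/-- `F` is a facet (maximal face) of `Δ`. -/
def IsFacet (Δ : Finset (Finset ℕ)) (F : Finset ℕ) : Prop :=
  F ∈ Δ ∧ ∀ G ∈ Δ, F ⊆ G → F = G

/-- The finset of facets of `Δ`. -/
def facets (Δ : Finset (Finset ℕ)) : Finset (Finset ℕ) :=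
  Δ.filter fun F => ∀ G ∈ Δ, F ⊆ G → F = G

/-- `Δ` is pure of dimension `d`: every facet has `d + 1` vertices. -/
def IsPure (d : ℕ) (Δ : Finset (Finset ℕ)) : Prop :=
  ∀ F, IsFacet Δ F → F.card = d + 1

/-- Dual graph of a pure `d`-dimensional complex: nodes are facets, two facets are
adjacent iff they share a face with `d` elements (a codimension-one face). -/
def dualGraph (d : ℕ) (Δ : Finset (Finset ℕ)) : SimpleGraph {F // F ∈ facets Δ} :=
  SimpleGraph.fromRel fun F G => ((F : Finset ℕ) ∩ (G : Finset ℕ)).card = d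

/-- `Δ` is strongly connected: its dual graph is connected. -/
def StronglyConnected (d : ℕ) (Δ : Finset (Finset ℕ)) : Prop :=
  (dualGraph d Δ).Connected

/-- The labeling of the vertices by `ℕ` is a unit interval order: whenever
`F = {v₀ < v₁ < ⋯ < v_d}` is a facet, every `(d+1)`-element subset of the integer
interval `{v₀, v₀+1, …, v_d}` is a facet. -/
def UnitIntervalOrder (d : ℕ) (Δ : Finset (Finset ℕ)) : Prop :=
  ∀ F, IsFacet Δ F → ∀ hF : F.Nonempty,
    ∀ S ⊆ Finset.Icc (F.min' hF) (F.max' hF), S.card = d + 1 → IsFacet Δ S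

/-- The increasing list of the vertices of a face. -/
def sortedList (F : Finset ℕ) : List ℕ := F.sort (· ≤ ·)

/-- Lexicographic order on faces, comparing the increasing lists of vertices. -/
def faceLexLt (F G : Finset ℕ) : Prop :=
  List.Lex (· < ·) (sortedList F) (sortedList G)

/-- `L` lists exactly the facets of `Δ`, in lexicographic order. -/
def LexFacetList (Δ : Finset (Finset ℕ)) (L : List (Finset ℕ)) : Prop :=
  L.Nodup ∧ L.toFinset = facets Δ ∧ L.Pairwise faceLexLt

/-- `L` is a shelling order of the pure `d`-dimensional complex `Δ`: it lists the
facets of `Δ` so that for each `k`, the intersection of `⟨L[k+1]⟩` with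
`⟨L[0], …, L[k]⟩` is pure of dimension `d - 1`, i.e. it is nonempty and each of
its faces is contained in a common `d`-element face of `L[k+1]` and some earlier
facet. -/
def IsShellingOrder (d : ℕ) (Δ : Finset (Finset ℕ)) (L : List (Finset ℕ)) : Prop :=
  L.Nodup ∧ L.toFinset = facets Δ ∧
  ∀ (k : ℕ) (hk : k + 1 < L.length),
    (∃ τ ⊆ L.get ⟨k + 1, hk⟩, τ.card = d ∧ ∃ G ∈ L.take (k + 1), τ ⊆ G) ∧
    (∀ σ ⊆ L.get ⟨k + 1, hk⟩, (∃ G ∈ L.take (k + 1), σ ⊆ G) →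
      ∃ τ, σ ⊆ τ ∧ τ ⊆ L.get ⟨k + 1, hk⟩ ∧ τ.card = d ∧ ∃ G ∈ L.take (k + 1), τ ⊆ G)

/-- `Δ` is shellable (as a pure `d`-dimensional complex). -/
def Shellable (d : ℕ) (Δ : Finset (Finset ℕ)) : Prop :=
  ∃ L, IsShellingOrder d Δ L

/-- The link of the vertex `v` in `Δ`. -/
def linkC (Δ : Finset (Finset ℕ)) (v : ℕ) : Finset (Finset ℕ) :=
  Δ.filter fun E => v ∉ E ∧ insert v E ∈ Δ

/-- The deletion of the vertex `v` from `Δ`. -/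
def delC (Δ : Finset (Finset ℕ)) (v : ℕ) : Finset (Finset ℕ) :=
  Δ.filter fun E => v ∉ E

/-- Vertex decomposability: `Δ` is a simplex (possibly the void/empty simplex `{∅}`),
or it has a shedding vertex `v` whose link and deletion are vertex decomposable and
such that every facet of the deletion is a facet of `Δ`. -/
inductive VertexDecomposable : Finset (Finset ℕ) → Prop
  | simplex (V : Finset ℕ) : VertexDecomposable V.powerset
  | shed (Δ : Finset (Finset ℕ)) (v : ℕ) :
      VertexDecomposable (linkC Δ v) → VertexDecomposable (delC Δ v) →
      (∀ F, IsFacet (delC Δ v) F → IsFacet Δ F) → VertexDecomposable Δ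

/-!
Induction on vertex decomposability. For a shedding vertex `v`, the facets of `Δ` are the
facets of `del v` together with the cones `v * G` over the facets `G` of `link v`. Shell
`del v` first and then the cones, in the order of a shelling of `link v`. The cone `v * G`
meets the earlier facets in `⟨G⟩` (already covered, as `G` lies in a facet of `del v`) and in
the cone over `⟨G⟩ ∩ ⟨earlier link facets⟩`; both pieces are pure of codimension one.
In dimension `0` the link is `{∅}`, which is not pure of dimension `-1`, but there every
ordering of the facets is a shelling.
-/

section

variable {Δ : Finset (Finset ℕ)} {F G : Finset ℕ} {v d : ℕ}

lemma mem_facets : F ∈ facets Δ ↔ IsFacet Δ F := by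
  simp [facets, IsFacet]

lemma exists_isFacet_superset (hF : F ∈ Δ) : ∃ G, IsFacet Δ G ∧ F ⊆ G := by
  obtain ⟨G, hG, hmax⟩ :=
    (Δ.filter (F ⊆ ·)).exists_max_image card ⟨F, mem_filter.mpr ⟨hF, subset_rfl⟩⟩
  rw [mem_filter] at hG
  refine ⟨G, ⟨hG.1, fun H hH hGH => ?_⟩, hG.2⟩
  exact eq_of_subset_of_card_le hGH (hmax H (mem_filter.mpr ⟨hH, hG.2.trans hGH⟩))

lemma IsComplex.delC (hC : IsComplex Δ) (v : ℕ) : IsComplex (delC Δ v) := by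
  intro F hF G hGF
  rw [_root_.delC, mem_filter] at hF ⊢
  exact ⟨hC F hF.1 G hGF, fun hv => hF.2 (hGF hv)⟩

lemma IsComplex.linkC (hC : IsComplex Δ) (v : ℕ) : IsComplex (linkC Δ v) := by
  intro F hF G hGF
  rw [_root_.linkC, mem_filter] at hF ⊢
  exact ⟨hC F hF.1 G hGF, fun hv => hF.2.1 (hGF hv), hC _ hF.2.2 _ (insert_subset_insert v hGF)⟩

lemma erase_mem_linkC (hC : IsComplex Δ) (hF : F ∈ Δ) (hv : v ∈ F) : F.erase v ∈ linkC Δ v :=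
  mem_filter.mpr ⟨hC F hF _ (erase_subset v F), notMem_erase v F, by rwa [insert_erase hv]⟩

lemma IsFacet.delC (hF : IsFacet Δ F) (hv : v ∉ F) : IsFacet (delC Δ v) F :=
  ⟨mem_filter.mpr ⟨hF.1, hv⟩, fun G hG => hF.2 G (mem_filter.mp hG).1⟩

lemma IsFacet.erase_linkC (hC : IsComplex Δ) (hF : IsFacet Δ F) (hv : v ∈ F) :
    IsFacet (linkC Δ v) (F.erase v) := by
  refine ⟨erase_mem_linkC hC hF.1 hv, fun G hG hFG => ?_⟩
  obtain ⟨-, hvG, hinsert⟩ := mem_filter.mp hG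
  rw [hF.2 _ hinsert (subset_insert_iff.mpr hFG), erase_insert hvG]

lemma IsFacet.insert_of_linkC (hC : IsComplex Δ) (hG : IsFacet (linkC Δ v) G) :
    IsFacet Δ (insert v G) := by
  obtain ⟨-, hvG, hinsert⟩ := mem_filter.mp hG.1
  refine ⟨hinsert, fun H hH hGH => ?_⟩
  obtain ⟨hvH, hGH⟩ := insert_subset_iff.mp hGH
  rw [hG.2 _ (erase_mem_linkC hC hH hvH) (subset_erase.mpr ⟨hGH, hvG⟩), insert_erase hvH]

lemma facets_eq_facets_delC_union (hC : IsComplex Δ)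
    (hshed : ∀ F, IsFacet (delC Δ v) F → IsFacet Δ F) :
    facets Δ = facets (delC Δ v) ∪ (facets (linkC Δ v)).image (insert v) := by
  ext F
  simp only [mem_union, mem_image, mem_facets]
  constructor
  · intro hF
    by_cases hv : v ∈ F
    · exact Or.inr ⟨F.erase v, hF.erase_linkC hC hv, insert_erase hv⟩
    · exact Or.inl (hF.delC hv)
  · rintro (hF | ⟨G, hG, rfl⟩)
    · exact hshed F hF
    · exact hG.insert_of_linkC hC

lemma IsPure.linkC (hC : IsComplex Δ) (hP : IsPure (d + 1) Δ) : IsPure d (linkC Δ v) := by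
  intro G hG
  have hcard := hP _ (hG.insert_of_linkC hC)
  rwa [card_insert_of_notMem (mem_filter.mp hG.1).2.1, add_left_inj] at hcard

lemma facets_powerset (V : Finset ℕ) : facets V.powerset = {V} := by
  ext F
  simp only [facets, mem_filter, mem_powerset, mem_singleton]
  constructor
  · rintro ⟨hFV, hmax⟩
    exact hmax V subset_rfl hFV
  · rintro rfl
    exact ⟨subset_rfl, fun G hGV hVG => subset_antisymm hVG hGV⟩

/-- Every face of `⟨F⟩ ∩ ⟨P⟩` lies in a `d`-element face of it. -/
def PureMeet (d : ℕ) (P : List (Finset ℕ)) (F : Finset ℕ) : Prop :=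
  ∀ σ ⊆ F, (∃ G ∈ P, σ ⊆ G) → ∃ τ, σ ⊆ τ ∧ τ ⊆ F ∧ τ.card = d ∧ ∃ G ∈ P, τ ⊆ G

def IsShellingStep (d : ℕ) (P : List (Finset ℕ)) (F : Finset ℕ) : Prop :=
  (∃ τ ⊆ F, τ.card = d ∧ ∃ G ∈ P, τ ⊆ G) ∧ PureMeet d P F

def ShellingSteps (d : ℕ) (L : List (Finset ℕ)) : Prop :=
  ∀ k (hk : k + 1 < L.length), IsShellingStep d (L.take (k + 1)) L[k + 1]

lemma pureMeet_nil : PureMeet d [] F := by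
  simp [PureMeet]

lemma List.Nodup.getElem_notMem_take {α : Type*} {L : List α} (h : L.Nodup) {k : ℕ}
    (hk : k < L.length) : L[k] ∉ L.take k := by
  have h' := h.sublist (L.take_sublist (k + 1))
  rw [← List.take_append_getElem hk] at h'
  exact fun hmem => (List.nodup_append.mp h').2.2 _ hmem _ (List.mem_singleton_self _) rfl

lemma ShellingSteps.append {L₁ L₂ : List (Finset ℕ)} (h₁ : ShellingSteps d L₁)
    (h₂ : ∀ j (hj : j < L₂.length), IsShellingStep d (L₁ ++ L₂.take j) L₂[j]) :
    ShellingSteps d (L₁ ++ L₂) := by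
  intro k hk
  by_cases hk₁ : k + 1 < L₁.length
  · rw [List.getElem_append_left hk₁, List.take_append_of_le_length hk₁.le]
    exact h₁ k hk₁
  · rw [not_lt] at hk₁
    rw [List.getElem_append_right hk₁, List.take_append, List.take_of_length_le hk₁]
    exact h₂ _ _

lemma isShellingStep_append_map_insert {P₁ P₂ : List (Finset ℕ)} (hP₁ : ∀ H ∈ P₁, v ∉ H)
    (hvG : v ∉ G) (hG : G.card = d + 1) (hGP₁ : ∃ H ∈ P₁, G ⊆ H) (hmeet : PureMeet d P₂ G) :
    IsShellingStep (d + 1) (P₁ ++ P₂.map (insert v)) (insert v G) := by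
  obtain ⟨H, hH, hGH⟩ := hGP₁
  have hG_meet : ∃ K ∈ P₁ ++ P₂.map (insert v), G ⊆ K := ⟨H, List.mem_append_left _ hH, hGH⟩
  refine ⟨⟨G, subset_insert v G, hG, hG_meet⟩, fun σ hσ ⟨K, hK, hσK⟩ => ?_⟩
  by_cases hvσ : v ∈ σ
  · -- `K` is a cone `v * K'`, and the meet of `G` with `K'` is handled inside the link
    obtain hK | hK := List.mem_append.mp hK
    · exact absurd (hσK hvσ) (hP₁ K hK)
    obtain ⟨K', hK', rfl⟩ := List.mem_map.mp hK
    obtain ⟨τ, hστ, hτG, hτ, L, hL, hτL⟩ :=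
      hmeet (σ.erase v) (subset_insert_iff.mp hσ) ⟨K', hK', subset_insert_iff.mp hσK⟩
    refine ⟨insert v τ, subset_insert_iff.mpr hστ, insert_subset_insert v hτG, ?_,
      insert v L, List.mem_append_right _ (List.mem_map_of_mem hL), insert_subset_insert v hτL⟩
    rw [card_insert_of_notMem fun h => hvG (hτG h), hτ]
  · exact ⟨G, (subset_insert_iff_of_notMem hvσ).mp hσ, subset_insert v G, hG, hG_meet⟩

lemma IsShellingOrder.append_map_insert {L₁ L₂ : List (Finset ℕ)} (hC : IsComplex Δ)
    (hshed : ∀ F, IsFacet (delC Δ v) F → IsFacet Δ F) (hPl : IsPure d (linkC Δ v))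
    (h₁ : IsShellingOrder (d + 1) (delC Δ v) L₁) (h₂ : IsShellingOrder d (linkC Δ v) L₂) :
    IsShellingOrder (d + 1) Δ (L₁ ++ L₂.map (insert v)) := by
  obtain ⟨nodup₁, hL₁, steps₁⟩ := h₁
  obtain ⟨nodup₂, hL₂, steps₂⟩ := h₂
  have facet₁ : ∀ F ∈ L₁, IsFacet (delC Δ v) F := fun F hF =>
    mem_facets.mp (hL₁ ▸ List.mem_toFinset.mpr hF)
  have facet₂ : ∀ G ∈ L₂, IsFacet (linkC Δ v) G := fun G hG =>
    mem_facets.mp (hL₂ ▸ List.mem_toFinset.mpr hG)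
  have hv₁ : ∀ F ∈ L₁, v ∉ F := fun F hF => (mem_filter.mp (facet₁ F hF).1).2
  have hv₂ : ∀ G ∈ L₂, v ∉ G := fun G hG => (mem_filter.mp (facet₂ G hG).1).2.1
  refine ⟨List.nodup_append.mpr ⟨nodup₁, nodup₂.map_on fun G hG G' hG' h => ?_, ?_⟩, ?_, ?_⟩
  · rw [← erase_insert (hv₂ G hG), h, erase_insert (hv₂ G' hG')]
  · rintro F hF _ hF' rfl
    obtain ⟨G, -, rfl⟩ := List.mem_map.mp hF'
    exact hv₁ _ hF (mem_insert_self v G)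
  · rw [List.toFinset_append, hL₁, facets_eq_facets_delC_union hC hshed, ← hL₂]
    congr 1
    ext F
    simp
  · refine ShellingSteps.append steps₁ fun j hj => ?_
    rw [List.length_map] at hj
    rw [List.getElem_map, ← List.map_take]
    have hG := facet₂ _ (L₂.getElem_mem hj)
    have hvG := hv₂ _ (L₂.getElem_mem hj)
    obtain ⟨H, hH, hGH⟩ :=
      exists_isFacet_superset (Δ := delC Δ v) (mem_filter.mpr ⟨(mem_filter.mp hG.1).1, hvG⟩)
    have hH₁ : H ∈ L₁ := List.mem_toFinset.mp (hL₁ ▸ mem_facets.mpr hH)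
    refine isShellingStep_append_map_insert hv₁ hvG (hPl _ hG) ⟨H, hH₁, hGH⟩ ?_
    cases j with
    | zero => exact pureMeet_nil
    | succ j => exact (steps₂ j hj).2

lemma isShellingOrder_singleton (h : facets Δ = {F}) : IsShellingOrder d Δ [F] :=
  ⟨List.nodup_singleton F, by simp [h], fun k hk => by simp at hk⟩

lemma shellable_of_isPure_zero (hP : IsPure 0 Δ) : Shellable 0 Δ := by
  refine ⟨(facets Δ).toList, nodup_toList _, toList_toFinset _, fun k hk => ?_⟩
  set L := (facets Δ).toList
  have facet : ∀ F ∈ L, IsFacet Δ F := fun F hF => mem_facets.mp (mem_toList.mp hF)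
  obtain ⟨G₀, hG₀⟩ : ∃ G, G ∈ L.take (k + 1) :=
    List.exists_mem_of_length_pos (by rw [List.length_take]; omega)
  refine ⟨⟨∅, empty_subset _, card_empty, G₀, hG₀, empty_subset _⟩,
    fun σ hσ ⟨G, hG, hσG⟩ => ⟨∅, ?_, empty_subset _, card_empty, G, hG, empty_subset _⟩⟩
  -- a nonempty `σ` would be the whole facet `L[k+1]`, hence equal to the earlier facet `G`
  rw [subset_empty]
  by_contra hσ₀
  have hF := facet _ (L.getElem_mem hk)
  have hσF : σ = L[k + 1] := eq_of_subset_of_card_le hσ <| by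
    rw [hP _ hF]
    exact card_pos.mpr (nonempty_iff_ne_empty.mpr hσ₀)
  have hFG : L[k + 1] = G := hF.2 G (facet G (List.mem_of_mem_take hG)).1 (hσF ▸ hσG)
  exact (nodup_toList _).getElem_notMem_take hk (hFG ▸ hG)

end

theorem stmt7 (d : ℕ) (Δ : Finset (Finset ℕ))
    (hC : IsComplex Δ) (hP : IsPure d Δ) (hVD : VertexDecomposable Δ) :
    Shellable d Δ := by
  induction hVD generalizing d with
  | simplex V => exact ⟨[V], isShellingOrder_singleton (facets_powerset V)⟩
  | shed Δ v _ _ hshed ih_link ih_del =>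
    cases d with
    | zero => exact shellable_of_isPure_zero hP
    | succ d =>
      have hPl := hP.linkC (v := v) hC
      obtain ⟨L₁, h₁⟩ := ih_del (d + 1) (hC.delC v) fun F hF => hP F (hshed F hF)
      obtain ⟨L₂, h₂⟩ := ih_link d (hC.linkC v) hPl
      exact ⟨_, h₁.append_map_insert hC hshed hPl h₂⟩
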